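/- Let X, Y be finite disjoint sets and Q ∈ 𝔓(Y). The mapping Φ : 𝔉_Q(X,Y) → 𝔐_Q(X,Y), f ↦ S(f) ∪ Q ∪ ⋃_{y∈Y} (f(y) × {y}), is a bijection, whose inverse sends R ∈ 𝔐_Q(X,Y) to the mapping Y → ℒ(R|_X), y ↦ (↓_R y) \ Y. -/

import Mathlib

/-!
Since `Y` is an upper end, a p.o.r. `R ∈ 𝔐_Q(X,Y)` has no pair leading from `Y` into `X`, so it
is the disjoint union of `R|_X`, `R|_Y = Q` and its pairs in `X × Y`, and the last are recorded by
`y ↦ (↓_R y) \ Y`. Conversely, transitivity of `Φ(f)` across these three pieces amounts exactly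
to each `f y` being a lower end of `S(f)` and `f` being monotone along `Q`.
-/

namespace Erne

variable {α : Type*}

/-- A partial order relation with carrier `X`: a reflexive, antisymmetric,
transitive subset of `X × X`. -/
def IsPor (X : Set α) (R : Set (α × α)) : Prop :=
  R ⊆ X ×ˢ X ∧ (∀ x ∈ X, (x, x) ∈ R) ∧
    (∀ x y, (x, y) ∈ R → (y, x) ∈ R → x = y) ∧
    (∀ x y z, (x, y) ∈ R → (y, z) ∈ R → (x, z) ∈ R)

/-- The carrier of a p.o.r. (recovered from reflexivity). -/
def carrier (R : Set (α × α)) : Set α := {x | (x, x) ∈ R}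

/-- The induced p.o.r. `R|_M = R ∩ (M × M)`. -/
def restrict (R : Set (α × α)) (M : Set α) : Set (α × α) := R ∩ M ×ˢ M

/-- The dual `R^d`. -/
def dual (R : Set (α × α)) : Set (α × α) := {p | (p.2, p.1) ∈ R}

/-- `↑_R M`. -/
def upSet (R : Set (α × α)) (M : Set α) : Set α := {x | ∃ y ∈ M, (y, x) ∈ R}

/-- `↓_R M`. -/
def downSet (R : Set (α × α)) (M : Set α) : Set α := {x | ∃ y ∈ M, (x, y) ∈ R}

/-- `↑_R x`. -/
def up (R : Set (α × α)) (x : α) : Set α := {z | (x, z) ∈ R}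

/-- `↓_R y`. -/
def down (R : Set (α × α)) (y : α) : Set α := {x | (x, y) ∈ R}

/-- `L` is a lower end of `R`. -/
def IsLowerEnd (R : Set (α × α)) (L : Set α) : Prop :=
  ∀ x y, (x, y) ∈ R → y ∈ L → x ∈ L

/-- `U` is an upper end of `R`. -/
def IsUpperEnd (R : Set (α × α)) (U : Set α) : Prop :=
  ∀ x y, (x, y) ∈ R → x ∈ U → y ∈ U

/-- `M` is convex in `R`. -/
def IsConvex (R : Set (α × α)) (M : Set α) : Prop :=
  ∀ a b x, a ∈ M → b ∈ M → (a, x) ∈ R → (x, b) ∈ R → x ∈ M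

/-- The set of maximal points of `R`: those `x` with `↑_R x = {x}`. -/
def maxPts (R : Set (α × α)) : Set α := {x | up R x = {x}}

/-- `max M = max R|_M`. -/
def maxOf (R : Set (α × α)) (M : Set α) : Set α := maxPts (restrict R M)

/-- `γ_R(M) = ⋃_{(m,n) ∈ M×M} (↑_R m) ∩ (↓_R n)`, the convex hull of `M` in `R`. -/
def gamma (R : Set (α × α)) (M : Set α) : Set α :=
  {x | ∃ m ∈ M, ∃ n ∈ M, (m, x) ∈ R ∧ (x, n) ∈ R}

/-- The antichain (diagonal) `Δ_Y` on `Y`. -/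
def diag (Y : Set α) : Set (α × α) := {p | p.1 = p.2 ∧ p.1 ∈ Y}

/-- `𝔘(X,Y)`: p.o.r.'s on `X ∪ Y` in which `Y` is an upper end. -/
def Uset (X Y : Set α) : Set (Set (α × α)) :=
  {R | IsPor (X ∪ Y) R ∧ IsUpperEnd R Y}

/-- `ℭ_Q(X,Y)`: p.o.r.'s on `X ∪ Y` with `R|_Y = Q` convex in `R`. -/
def Cset (Q : Set (α × α)) (X Y : Set α) : Set (Set (α × α)) :=
  {R | IsPor (X ∪ Y) R ∧ restrict R Y = Q ∧ IsConvex R Y}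

/-- `𝔐_Q(X,Y) = 𝔘(X,Y) ∩ ℭ_Q(X,Y)`. -/
def Mset (Q : Set (α × α)) (X Y : Set α) : Set (Set (α × α)) :=
  Uset X Y ∩ Cset Q X Y

/-- `𝔐*_Q(X,Y)`: members of `ℭ_Q(X,Y)` with `max Q = max R`. -/
def MstarSet (Q : Set (α × α)) (X Y : Set α) : Set (Set (α × α)) :=
  {R ∈ Cset Q X Y | maxPts Q = maxPts R}

/-- `ℑ_Q(X,Y)`: p.o.r.'s on `X ∪ Y` with `R|_Y = Q`. -/
def Iset (Q : Set (α × α)) (X Y : Set α) : Set (Set (α × α)) :=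
  {R | IsPor (X ∪ Y) R ∧ restrict R Y = Q}

/-- `𝔑*_Q(X,Y)`: members of `ℑ_Q(X,Y)` with `max Q = max R`. -/
def NstarSet (Q : Set (α × α)) (X Y : Set α) : Set (Set (α × α)) :=
  {R ∈ Iset Q X Y | maxPts Q = maxPts R}

/-- `τ_{X,Y}(R) = (R|_X)^d ∪ ((X×Y) \ R) ∪ (R|_Y)^d`. -/
def tau (X Y : Set α) (R : Set (α × α)) : Set (α × α) :=
  dual (restrict R X) ∪ ((X ×ˢ Y) \ R) ∪ dual (restrict R Y)

/-- `𝒢_Q(M)`: members `G` of `ℑ_Q(M,Y)` with `γ_G(Y) = c(G)`. -/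
def GsetM (Q : Set (α × α)) (Y M : Set α) : Set (Set (α × α)) :=
  {G ∈ Iset Q M Y | gamma G Y = carrier G}

/-- `𝔊_Q(X) = ⋃_{M ⊆ X} 𝒢_Q(M)`. -/
def Gset (Q : Set (α × α)) (X Y : Set α) : Set (Set (α × α)) :=
  {G | ∃ M ⊆ X, G ∈ GsetM Q Y M}

/-- `ℒ(P)`: the lower ends of `P` (subsets of the carrier of `P`). -/
def lowerEnds (P : Set (α × α)) : Set (Set α) :=
  {L | L ⊆ carrier P ∧ IsLowerEnd P L}

/-- `ℋ_Q(Y, ℒ(P))`: mappings `f : Y → ℒ(P)` with `(a,b) ∈ Q → f a ⊆ f b`. -/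
def Hset (Q P : Set (α × α)) (Y : Set α) : Set (↥Y → Set α) :=
  {f | (∀ y, f y ∈ lowerEnds P) ∧
    ∀ a b : ↥Y, ((a : α), (b : α)) ∈ Q → f a ⊆ f b}

/-- `Φ(f) = P ∪ Q ∪ ⋃_{y ∈ Y} (f(y) × {y})` for `f ∈ ℋ_Q(Y, ℒ(P))`. -/
def Phi (Q : Set (α × α)) (Y : Set α) (P : Set (α × α)) (f : ↥Y → Set α) :
    Set (α × α) :=
  P ∪ Q ∪ {p | ∃ h : p.2 ∈ Y, p.1 ∈ f ⟨p.2, h⟩}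

/-- `𝔉_Q(X,Y)`: pairs `(P, f)` with `P ∈ 𝔓(X)` and `f ∈ ℋ_Q(Y, ℒ(P))`;
the first component encodes `S(f) = P`. -/
def Fset (Q : Set (α × α)) (X Y : Set α) :
    Set (Set (α × α) × (↥Y → Set α)) :=
  {pf | IsPor X pf.1 ∧ pf.2 ∈ Hset Q pf.1 Y}

/-- `𝔉*_Q(X,Y)`: those `f ∈ 𝔉_Q(X,Y)` with `X = ⋃_{y ∈ Y} f(y)`. -/
def FstarSet (Q : Set (α × α)) (X Y : Set α) :
    Set (Set (α × α) × (↥Y → Set α)) :=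
  {pf ∈ Fset Q X Y | X = ⋃ y : ↥Y, pf.2 y}

/-- The transitive hull of `S`: the smallest transitive relation containing `S`. -/
def transHull (S : Set (α × α)) : Set (α × α) :=
  {p | Relation.TransGen (fun a b => (a, b) ∈ S) p.1 p.2}

section Gluing

variable {X Y : Set α} {Q P : Set (α × α)} {f : ↥Y → Set α}

lemma mem_phi {x y : α} :
    (x, y) ∈ Phi Q Y P f ↔ (x, y) ∈ P ∨ (x, y) ∈ Q ∨ ∃ h : y ∈ Y, x ∈ f ⟨y, h⟩ := by
  simp only [Phi, Set.mem_union, Set.mem_ofPred_eq, or_assoc]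

lemma Hset.subset (hP : P ⊆ X ×ˢ X) (hf : f ∈ Hset Q P Y) (y : ↥Y) : f y ⊆ X :=
  fun _ hx => (hP ((hf.1 y).1 hx)).1

lemma phi_subset (hP : P ⊆ X ×ˢ X) (hQ : Q ⊆ Y ×ˢ Y) (hf : ∀ y, f y ⊆ X) :
    Phi Q Y P f ⊆ (X ∪ Y) ×ˢ (X ∪ Y) := by
  rintro ⟨x, y⟩ h
  rcases mem_phi.mp h with h | h | ⟨hy, hx⟩
  · exact ⟨Or.inl (hP h).1, Or.inl (hP h).2⟩
  · exact ⟨Or.inr (hQ h).1, Or.inr (hQ h).2⟩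
  · exact ⟨Or.inl (hf _ hx), Or.inr hy⟩

lemma mem_of_mem_phi_of_mem_left (hXY : Disjoint X Y) (hQ : Q ⊆ Y ×ˢ Y) {x y : α}
    (h : (x, y) ∈ Phi Q Y P f) (hy : y ∈ X) : (x, y) ∈ P := by
  rcases mem_phi.mp h with h | h | ⟨hyY, -⟩
  · exact h
  · exact absurd (hQ h).2 (hXY.notMem_of_mem_left hy)
  · exact absurd hyY (hXY.notMem_of_mem_left hy)

lemma mem_of_mem_phi_of_mem_right (hXY : Disjoint X Y) (hP : P ⊆ X ×ˢ X) (hf : ∀ y, f y ⊆ X)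
    {x y : α} (h : (x, y) ∈ Phi Q Y P f) (hx : x ∈ Y) : (x, y) ∈ Q := by
  rcases mem_phi.mp h with h | h | ⟨_, hxf⟩
  · exact absurd hx (hXY.notMem_of_mem_left (hP h).1)
  · exact h
  · exact absurd hx (hXY.notMem_of_mem_left (hf _ hxf))

lemma mem_apply_of_mem_phi (hXY : Disjoint X Y) (hP : P ⊆ X ×ˢ X) (hQ : Q ⊆ Y ×ˢ Y) {x y : α}
    (h : (x, y) ∈ Phi Q Y P f) (hx : x ∉ Y) (hy : y ∈ Y) : x ∈ f ⟨y, hy⟩ := by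
  rcases mem_phi.mp h with h | h | ⟨_, hxf⟩
  · exact absurd hy (hXY.notMem_of_mem_left (hP h).2)
  · exact absurd (hQ h).1 hx
  · exact hxf

lemma isPor_phi (hXY : Disjoint X Y) (hQ : IsPor Y Q) (hP : IsPor X P) (hf : f ∈ Hset Q P Y) :
    IsPor (X ∪ Y) (Phi Q Y P f) := by
  have hfX := Hset.subset hP.1 hf
  have hsub := phi_subset hP.1 hQ.1 hfX
  refine ⟨hsub, ?_, ?_, ?_⟩
  · rintro x (hx | hx)
    · exact mem_phi.mpr (Or.inl (hP.2.1 x hx))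
    · exact mem_phi.mpr (Or.inr (Or.inl (hQ.2.1 x hx)))
  · intro x y hxy hyx
    rcases (hsub hxy).2 with hy | hy
    · have hxyP := mem_of_mem_phi_of_mem_left hXY hQ.1 hxy hy
      exact hP.2.2.1 x y hxyP (mem_of_mem_phi_of_mem_left hXY hQ.1 hyx (hP.1 hxyP).1)
    · have hyxQ := mem_of_mem_phi_of_mem_right hXY hP.1 hfX hyx hy
      exact hQ.2.2.1 x y (mem_of_mem_phi_of_mem_right hXY hP.1 hfX hxy (hQ.1 hyxQ).2) hyxQ
  · intro x y z hxy hyz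
    rcases (hsub hyz).2 with hz | hz
    · have hyzP := mem_of_mem_phi_of_mem_left hXY hQ.1 hyz hz
      have hxyP := mem_of_mem_phi_of_mem_left hXY hQ.1 hxy (hP.1 hyzP).1
      exact mem_phi.mpr (Or.inl (hP.2.2.2 x y z hxyP hyzP))
    by_cases hx : x ∈ Y
    · have hxyQ := mem_of_mem_phi_of_mem_right hXY hP.1 hfX hxy hx
      have hyzQ := mem_of_mem_phi_of_mem_right hXY hP.1 hfX hyz (hQ.1 hxyQ).2
      exact mem_phi.mpr (Or.inr (Or.inl (hQ.2.2.2 x y z hxyQ hyzQ)))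
    refine mem_phi.mpr (Or.inr (Or.inr ⟨hz, ?_⟩))
    by_cases hy : y ∈ Y
    · have hyzQ := mem_of_mem_phi_of_mem_right hXY hP.1 hfX hyz hy
      exact hf.2 ⟨y, hy⟩ ⟨z, hz⟩ hyzQ (mem_apply_of_mem_phi hXY hP.1 hQ.1 hxy hx hy)
    · have hxyP := mem_of_mem_phi_of_mem_left hXY hQ.1 hxy ((hsub hxy).2.resolve_right hy)
      exact (hf.1 _).2 x y hxyP (mem_apply_of_mem_phi hXY hP.1 hQ.1 hyz hy hz)

lemma isUpperEnd_phi (hXY : Disjoint X Y) (hQ : Q ⊆ Y ×ˢ Y) (hP : P ⊆ X ×ˢ X)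
    (hf : ∀ y, f y ⊆ X) : IsUpperEnd (Phi Q Y P f) Y :=
  fun _ _ h hx => (hQ (mem_of_mem_phi_of_mem_right hXY hP hf h hx)).2

lemma restrict_phi_left (hXY : Disjoint X Y) (hQ : Q ⊆ Y ×ˢ Y) (hP : P ⊆ X ×ˢ X) :
    restrict (Phi Q Y P f) X = P := by
  ext ⟨x, y⟩
  refine ⟨fun h => mem_of_mem_phi_of_mem_left hXY hQ h.1 h.2.2, fun h => ⟨?_, hP h⟩⟩
  exact mem_phi.mpr (Or.inl h)

lemma restrict_phi_right (hXY : Disjoint X Y) (hQ : Q ⊆ Y ×ˢ Y) (hP : P ⊆ X ×ˢ X)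
    (hf : ∀ y, f y ⊆ X) : restrict (Phi Q Y P f) Y = Q := by
  ext ⟨x, y⟩
  refine ⟨fun h => mem_of_mem_phi_of_mem_right hXY hP hf h.1 h.2.1, fun h => ⟨?_, hQ h⟩⟩
  exact mem_phi.mpr (Or.inr (Or.inl h))

lemma down_phi_diff (hXY : Disjoint X Y) (hQ : Q ⊆ Y ×ˢ Y) (hP : P ⊆ X ×ˢ X)
    (hf : ∀ y, f y ⊆ X) (y : ↥Y) : down (Phi Q Y P f) y \ Y = f y := by
  ext x
  refine ⟨fun h => mem_apply_of_mem_phi hXY hP hQ h.1 h.2 y.2, fun h => ⟨?_, ?_⟩⟩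
  · exact mem_phi.mpr (Or.inr (Or.inr ⟨y.2, h⟩))
  · exact hXY.notMem_of_mem_left (hf y h)

end Gluing

lemma IsUpperEnd.isConvex {R : Set (α × α)} {M : Set α} (hM : IsUpperEnd R M) :
    IsConvex R M :=
  fun a _ x ha _ hax _ => hM a x hax ha

lemma phi_mem_mset {X Y : Set α} {Q P : Set (α × α)} {f : ↥Y → Set α} (hXY : Disjoint X Y)
    (hQ : IsPor Y Q) (hP : IsPor X P) (hf : f ∈ Hset Q P Y) : Phi Q Y P f ∈ Mset Q X Y := by
  have hfX := Hset.subset hP.1 hf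
  have hpor := isPor_phi hXY hQ hP hf
  have hup := isUpperEnd_phi hXY hQ.1 hP.1 hfX
  exact ⟨⟨hpor, hup⟩, hpor, restrict_phi_right hXY hQ.1 hP.1 hfX, hup.isConvex⟩

section Splitting

variable {X Y : Set α} {R : Set (α × α)}

lemma IsPor.restrict {Z M : Set α} (hR : IsPor Z R) (hM : M ⊆ Z) : IsPor M (restrict R M) := by
  refine ⟨Set.inter_subset_right, fun x hx => ⟨hR.2.1 x (hM hx), hx, hx⟩,
    fun x y h1 h2 => hR.2.2.1 x y h1.1 h2.1, ?_⟩
  rintro x y z ⟨hxy, hx, -⟩ ⟨hyz, -, hz⟩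
  exact ⟨hR.2.2.2 x y z hxy hyz, hx, hz⟩

lemma down_diff_mem_lowerEnds (hXY : Disjoint X Y) (hR : IsPor (X ∪ Y) R) (y : α) :
    down R y \ Y ∈ lowerEnds (restrict R X) := by
  constructor
  · rintro x ⟨hxy, hxY⟩
    have hxX : x ∈ X := (hR.1 hxy).1.resolve_right hxY
    exact ⟨hR.2.1 x (Or.inl hxX), hxX, hxX⟩
  · rintro a b ⟨hab, haX, -⟩ ⟨hby, -⟩
    exact ⟨hR.2.2.2 a b y hab hby, hXY.notMem_of_mem_left haX⟩

lemma down_mono (hR : IsPor X R) {a b : α} (hab : (a, b) ∈ R) : down R a ⊆ down R b :=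
  fun x hxa => hR.2.2.2 x a b hxa hab

lemma mem_fset_of_mem_mset {Q : Set (α × α)} (hXY : Disjoint X Y) (hR : R ∈ Mset Q X Y) :
    (restrict R X, fun y : ↥Y => down R y \ Y) ∈ Fset Q X Y := by
  obtain ⟨-, hpor, hRQ, -⟩ := hR
  refine ⟨hpor.restrict Set.subset_union_left,
    fun y => down_diff_mem_lowerEnds hXY hpor y, fun a b hab => ?_⟩
  rw [← hRQ] at hab
  exact Set.sdiff_subset_sdiff_left (down_mono hpor hab.1)

lemma phi_restrict_down (hR : R ∈ Uset X Y) :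
    Phi (restrict R Y) Y (restrict R X) (fun y : ↥Y => down R y \ Y) = R := by
  obtain ⟨hpor, hup⟩ := hR
  ext ⟨x, y⟩
  rw [mem_phi]
  refine ⟨fun h => ?_, fun h => ?_⟩
  · rcases h with h | h | ⟨_, h, -⟩
    exacts [h.1, h.1, h]
  by_cases hx : x ∈ Y
  · exact Or.inr (Or.inl ⟨h, hx, hup x y h hx⟩)
  by_cases hy : y ∈ Y
  · exact Or.inr (Or.inr ⟨hy, h, hx⟩)
  · exact Or.inl ⟨h, (hpor.1 h).1.resolve_right hx, (hpor.1 h).2.resolve_right hy⟩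

end Splitting

theorem stmt6_general {α : Type*} (X Y : Set α)
    (hXY : Disjoint X Y) (Q : Set (α × α)) (hQ : IsPor Y Q) :
    Set.BijOn (fun pf : Set (α × α) × (↥Y → Set α) => Phi Q Y pf.1 pf.2)
      (Fset Q X Y) (Mset Q X Y) ∧
    ∀ R ∈ Mset Q X Y,
      (restrict R X, fun y : ↥Y => down R (y : α) \ Y) ∈ Fset Q X Y ∧
      Phi Q Y (restrict R X) (fun y : ↥Y => down R (y : α) \ Y) = R := by
  have hinv : Set.InvOn (fun R => (restrict R X, fun y : ↥Y => down R (y : α) \ Y))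
      (fun pf : Set (α × α) × (↥Y → Set α) => Phi Q Y pf.1 pf.2) (Fset Q X Y) (Mset Q X Y) := by
    refine ⟨fun pf ⟨hP, hf⟩ => Prod.ext ?_ (funext fun y => ?_), fun R hR => ?_⟩
    · exact restrict_phi_left hXY hQ.1 hP.1
    · exact down_phi_diff hXY hQ.1 hP.1 (Hset.subset hP.1 hf) y
    · have hRQ : restrict R Y = Q := hR.2.2.1
      simpa only [hRQ] using phi_restrict_down hR.1
  refine ⟨hinv.bijOn (fun pf hpf => phi_mem_mset hXY hQ hpf.1 hpf.2)
    (fun R hR => mem_fset_of_mem_mset hXY hR), fun R hR => ⟨mem_fset_of_mem_mset hXY hR, hinv.2 hR⟩⟩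

/-- `Φ : 𝔉_Q(X,Y) → 𝔐_Q(X,Y)` is a bijection with inverse
`R ↦ (y ↦ (↓_R y) \ Y)` (together with `S(f) = R|_X`). -/
theorem stmt6 {α : Type*} (X Y : Set α) (hX : X.Finite) (hY : Y.Finite)
    (hXY : Disjoint X Y) (Q : Set (α × α)) (hQ : IsPor Y Q) :
    Set.BijOn (fun pf : Set (α × α) × (↥Y → Set α) => Phi Q Y pf.1 pf.2)
      (Fset Q X Y) (Mset Q X Y) ∧
    ∀ R ∈ Mset Q X Y,
      (restrict R X, fun y : ↥Y => down R (y : α) \ Y) ∈ Fset Q X Y ∧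
      Phi Q Y (restrict R X) (fun y : ↥Y => down R (y : α) \ Y) = R :=
  stmt6_general X Y hXY Q hQ

end Erne
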